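/- For every N ≥ 2 and every t ∈ [0,1], the derivative of the interpolating quenched free energy of the two-leg ladder satisfies (d/dt) f_N^ladder(t) = -(βN)^{-1} Σ_{i=1}^{N} E[ log( ⟨e^{β(K_{i,1}σ_{i,1}σ_{i+1,1} + K_{i,2}σ_{i,2}σ_{i+1,2})}⟩_{H_{\i}(t)} / ⟨e^{β(l̂_{i,1}σ_{i,1}σ_{i,2} + l̂_{i,2}σ_{i+1,1}σ_{i+1,2})}⟩_{H_{\i}(t)} ) ], where H_{\i}(t) is the interpolating ladder Hamiltonian with the i-th interpolated slice removed (it contains neither K_{i,1}, K_{i,2}, l̂_{i,1}, l̂_{i,2} nor M_i) and ⟨·⟩_{H_{\i}(t)} is the Gibbs thermal average with respect to H_{\i}(t) at inverse temperature β. -/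

import Mathlib

open MeasureTheory Real Filter

/-- Spin value of a Boolean spin variable: `true ↦ 1`, `false ↦ -1`. -/
noncomputable def spin (b : Bool) : ℝ := if b then 1 else -1

/-- Cyclic successor on `Fin N`. -/
def nxt {N : ℕ} (i : Fin N) : Fin N := ⟨(i.val + 1) % N, Nat.mod_lt _ i.pos⟩

/-- Inverse hyperbolic tangent. -/
noncomputable def artanh (x : ℝ) : ℝ := Real.log ((1 + x) / (1 - x)) / 2

/-- Partition function of the two-leg ladder Ising spin glass with periodic boundary
conditions: a configuration `σ : Fin N → Bool × Bool` gives the spins `(σ i).1 = σ_{i,1}`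
and `(σ i).2 = σ_{i,2}` on the two legs. -/
noncomputable def ladderZ (N : ℕ) (β : ℝ) (K1 K2 L : Fin N → ℝ) : ℝ :=
  ∑ σ : Fin N → Bool × Bool,
    Real.exp (β * ((∑ i : Fin N, L i * spin (σ i).1 * spin (σ i).2) +
      ∑ i : Fin N, (K1 i * spin (σ i).1 * spin (σ (nxt i)).1 +
        K2 i * spin (σ i).2 * spin (σ (nxt i)).2)))

/-- Quenched free energy density `f_N^ladder` of the two-leg ladder, with i.i.d. couplings
`K_{i,1} ~ μ1`, `K_{i,2} ~ μ2` and rung couplings `L_i ~ μL`, all independent. -/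
noncomputable def ladderF (β : ℝ) (μ1 μ2 μL : Measure ℝ) (N : ℕ) : ℝ :=
  -(1 / (β * N)) * ∫ ω : (Fin N → ℝ) × (Fin N → ℝ) × (Fin N → ℝ),
    Real.log (ladderZ N β ω.1 ω.2.1 ω.2.2) ∂((Measure.pi fun _ : Fin N => μ1).prod
      ((Measure.pi fun _ : Fin N => μ2).prod (Measure.pi fun _ : Fin N => μL)))

/-- The replica symmetric cavity free energy `f_RS^ladder`; the coordinates are
`ω.1 = K_1`, `ω.2.1 = K_2`, `ω.2.2.1 = L`, `ω.2.2.2 = l̂`. -/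
noncomputable def ladderRS (β : ℝ) (μ1 μ2 μL μl : Measure ℝ) : ℝ :=
  -(1 / β) * ∫ ω : ℝ × ℝ × ℝ × ℝ,
    Real.log (4 * Real.cosh (β * ω.1) * Real.cosh (β * ω.2.1) *
      Real.cosh (β * (ω.2.2.1 + ω.2.2.2)) / Real.cosh (β * ω.2.2.2))
    ∂(μ1.prod (μ2.prod (μL.prod μl)))

/-- `μl` is a ladder cavity measure for `(β, μ1, μ2, μL)`: if `K_1 ~ μ1`, `K_2 ~ μ2`,
`L ~ μL`, `l̂' ~ μl` are independent then `(1/β)·artanh(tanh(βK_1)tanh(βK_2)tanh(β(L+l̂')))`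
again has law `μl`. -/
def IsLadderCavity (β : ℝ) (μ1 μ2 μL μl : Measure ℝ) : Prop :=
  Measure.map (fun ω : ℝ × ℝ × ℝ × ℝ =>
    (1 / β) * _root_.artanh (Real.tanh (β * ω.1) * Real.tanh (β * ω.2.1) *
      Real.tanh (β * (ω.2.2.1 + ω.2.2.2)))) (μ1.prod (μ2.prod (μL.prod μl))) = μl

/-- Bernoulli weight of an outcome `m : Bool` for a Bernoulli variable with mean `t`. -/
noncomputable def bern (t : ℝ) (m : Bool) : ℝ := if m then t else 1 - t

/-- Partition function of the interpolating ladder Hamiltonian for a fixed realization of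
the leg couplings `K1, K2`, rung couplings `L`, cavity couplings `l1, l2` and dilution
variables `m`: an active slice (`m i = true`) carries the leg interactions
`K_{i,1} σ_{i,1} σ_{i+1,1} + K_{i,2} σ_{i,2} σ_{i+1,2}`, while an inactive slice carries
the cavity couplings `l̂_{i,1} σ_{i,1} σ_{i,2} + l̂_{i,2} σ_{i+1,1} σ_{i+1,2}`. -/
noncomputable def ladderZt (N : ℕ) (β : ℝ) (K1 K2 L l1 l2 : Fin N → ℝ)
    (m : Fin N → Bool) : ℝ :=
  ∑ σ : Fin N → Bool × Bool,
    Real.exp (β * ((∑ i : Fin N, L i * spin (σ i).1 * spin (σ i).2) +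
      ∑ i : Fin N,
        (if m i then K1 i * spin (σ i).1 * spin (σ (nxt i)).1 +
            K2 i * spin (σ i).2 * spin (σ (nxt i)).2
          else l1 i * spin (σ i).1 * spin (σ i).2 +
            l2 i * spin (σ (nxt i)).1 * spin (σ (nxt i)).2)))

/-- Interpolating quenched free energy `f_N^ladder(t)` of the two-leg ladder: the
expectation over the i.i.d. Bernoulli dilution variables `M_i` with mean `t` is written as
a weighted sum, and the expectation over `K_{·,1}, K_{·,2}, L, l̂_{·,1}, l̂_{·,2}` as an
integral with respect to the product measure (coordinates `ω.1 = K_{·,1}`,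
`ω.2.1 = K_{·,2}`, `ω.2.2.1 = L`, `ω.2.2.2.1 = l̂_{·,1}`, `ω.2.2.2.2 = l̂_{·,2}`). -/
noncomputable def ladderFt (β : ℝ) (μ1 μ2 μL μl : Measure ℝ) (N : ℕ) (t : ℝ) : ℝ :=
  -(1 / (β * N)) *
    ∫ ω : (Fin N → ℝ) × (Fin N → ℝ) × (Fin N → ℝ) × (Fin N → ℝ) × (Fin N → ℝ),
      ∑ m : Fin N → Bool, (∏ i : Fin N, bern t (m i)) *
        Real.log (ladderZt N β ω.1 ω.2.1 ω.2.2.1 ω.2.2.2.1 ω.2.2.2.2 m)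
    ∂((Measure.pi fun _ : Fin N => μ1).prod ((Measure.pi fun _ : Fin N => μ2).prod
      ((Measure.pi fun _ : Fin N => μL).prod ((Measure.pi fun _ : Fin N => μl).prod
        (Measure.pi fun _ : Fin N => μl)))))

/-- Weighted sum `∑_σ g(σ) e^{-β H_{\i}(t)(σ)}` for the interpolating ladder Hamiltonian
with the `i`-th interpolated slice removed (it contains neither `K_{i,1}`, `K_{i,2}`,
`l̂_{i,1}`, `l̂_{i,2}` nor `M_i`). -/
noncomputable def ladderCutW (N : ℕ) (β : ℝ) (K1 K2 L l1 l2 : Fin N → ℝ)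
    (m : Fin N → Bool) (i : Fin N) (g : (Fin N → Bool × Bool) → ℝ) : ℝ :=
  ∑ σ : Fin N → Bool × Bool, g σ *
    Real.exp (β * ((∑ j : Fin N, L j * spin (σ j).1 * spin (σ j).2) +
      ∑ j ∈ Finset.univ.erase i,
        (if m j then K1 j * spin (σ j).1 * spin (σ (nxt j)).1 +
            K2 j * spin (σ j).2 * spin (σ (nxt j)).2
          else l1 j * spin (σ j).1 * spin (σ j).2 +
            l2 j * spin (σ (nxt j)).1 * spin (σ (nxt j)).2)))

/-- Gibbs thermal average `⟨g⟩_{H_{\i}(t)}` with respect to the interpolating ladder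
Hamiltonian with the `i`-th interpolated slice removed. -/
noncomputable def ladderCutAvg (N : ℕ) (β : ℝ) (K1 K2 L l1 l2 : Fin N → ℝ)
    (m : Fin N → Bool) (i : Fin N) (g : (Fin N → Bool × Bool) → ℝ) : ℝ :=
  ladderCutW N β K1 K2 L l1 l2 m i g / ladderCutW N β K1 K2 L l1 l2 m i (fun _ => 1)

/-!
Averaging over the dilution variables `M` first, `f_N^ladder(t)` is a polynomial in `t` whose
coefficients `E log Z_m` are finite, since `|log Z_m| ≤ N log 4 + |β| · Σ |couplings|`.
Differentiating the Bernoulli weights gives the Russo–Margulis formula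
`d/dt E_t[c(M)] = Σ_i E_t[c(M with M_i = 1) - c(M with M_i = 0)]`. Finally, `Z` with `M_i = 1`
(resp. `M_i = 0`) is the cavity weight of `e^{β(K-slice)}` (resp. `e^{β(l̂-slice)}`), and the
normalisation of the two cavity averages cancels in their ratio.
-/

open Finset Function

section Bernoulli

variable {ι : Type*} [Fintype ι] [DecidableEq ι]

theorem sum_update_true_add_update_false {M : Type*} [AddCommMonoid M] (i : ι)
    (g : (ι → Bool) → M) :
    ∑ m, (g (update m i true) + g (update m i false)) = 2 • ∑ m, g m := by
  have hflip : Involutive fun m : ι → Bool => update m i !(m i) := fun m => by simp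
  have hpair : ∀ m, g (update m i true) + g (update m i false) = g m + g (update m i !(m i)) := by
    intro m
    cases hm : m i
    · rw [← hm, update_eq_self, add_comm, hm, Bool.not_false]
    · rw [← hm, update_eq_self, hm, Bool.not_true]
  rw [sum_congr rfl fun m _ => hpair m, sum_add_distrib,
    Fintype.sum_bijective _ hflip.bijective _ g fun _ => rfl, two_nsmul]

theorem hasDerivAt_bern (t : ℝ) (b : Bool) :
    HasDerivAt (fun s => bern s b) (if b then 1 else -1) t := by
  cases b
  · simpa [bern] using (hasDerivAt_id' t).const_sub 1
  · simpa [bern] using hasDerivAt_id' t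

theorem prod_erase_bern_update (t : ℝ) (m : ι → Bool) (i : ι) (b : Bool) :
    ∏ j ∈ univ.erase i, bern t (update m i b j) = ∏ j ∈ univ.erase i, bern t (m j) :=
  prod_congr rfl fun j hj => by rw [update_of_ne (ne_of_mem_erase hj)]

theorem prod_bern_update (t : ℝ) (m : ι → Bool) (i : ι) (b : Bool) :
    ∏ j, bern t (update m i b j) = bern t b * ∏ j ∈ univ.erase i, bern t (m j) := by
  rw [← mul_prod_erase univ _ (mem_univ i), update_self, prod_erase_bern_update]

/-- Both sides are unchanged when each `m` is paired with its flip at `i`, and after pairing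
the `i`-th coordinate is summed out: the weight `∏_{j ≠ i}` does not see it, and
`bern t true + bern t false = 1`. -/
theorem sum_prod_erase_bern_mul (t : ℝ) (i : ι) (c : (ι → Bool) → ℝ) :
    ∑ m, (∏ j ∈ univ.erase i, bern t (m j)) * (if m i then 1 else -1) * c m =
      ∑ m, (∏ j, bern t (m j)) * (c (update m i true) - c (update m i false)) := by
  refine (nsmul_right_injective two_ne_zero : Injective fun x : ℝ => 2 • x) ?_
  dsimp only
  rw [← sum_update_true_add_update_false i, ← sum_update_true_add_update_false i]
  refine sum_congr rfl fun m _ => ?_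
  simp only [prod_erase_bern_update, prod_bern_update, update_self, update_idem]
  simp only [bern, if_true, Bool.false_eq_true, if_false]
  ring

/-- Russo–Margulis formula for i.i.d. Bernoulli variables of mean `t`. -/
theorem hasDerivAt_sum_prod_bern_mul (c : (ι → Bool) → ℝ) (t : ℝ) :
    HasDerivAt (fun s => ∑ m, (∏ j, bern s (m j)) * c m)
      (∑ i, ∑ m, (∏ j, bern t (m j)) * (c (update m i true) - c (update m i false))) t := by
  have hprod : ∀ m : ι → Bool, HasDerivAt (fun s => ∏ j, bern s (m j))
      (∑ i, (∏ j ∈ univ.erase i, bern t (m j)) * (if m i then 1 else -1)) t := fun m => by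
    simpa using HasDerivAt.fun_finsetProd fun j _ => hasDerivAt_bern t (m j)
  refine (HasDerivAt.fun_sum fun m _ => (hprod m).mul_const (c m)).congr_deriv ?_
  simp only [sum_mul]
  rw [sum_comm]
  exact sum_congr rfl fun i _ => sum_prod_erase_bern_mul t i c

end Bernoulli

theorem integral_sum_mul {α ι : Type*} [MeasurableSpace α] [Fintype ι] {ρ : Measure α}
    (w : ι → ℝ) {F : ι → α → ℝ} (hF : ∀ i, Integrable (F i) ρ) :
    ∫ x, ∑ i, w i * F i x ∂ρ = ∑ i, w i * ∫ x, F i x ∂ρ := by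
  rw [integral_finsetSum _ fun i _ => (hF i).const_mul (w i)]
  exact sum_congr rfl fun i _ => integral_const_mul (w i) _

theorem abs_log_sum_exp_le {α : Type*} [Fintype α] [Nonempty α] (f : α → ℝ) {C : ℝ}
    (hf : ∀ a, |f a| ≤ C) : |log (∑ a, exp (f a))| ≤ log (Fintype.card α) + C := by
  have hcard : 0 ≤ log (Fintype.card α) := log_nonneg (by exact_mod_cast Fintype.card_pos)
  have hZ : 0 < ∑ a, exp (f a) := sum_pos (fun a _ => exp_pos (f a)) univ_nonempty
  have hlower : -C ≤ log (∑ a, exp (f a)) := by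
    obtain ⟨a⟩ := ‹Nonempty α›
    rw [le_log_iff_exp_le hZ]
    exact (exp_le_exp.2 (neg_le_of_abs_le (hf a))).trans
      (single_le_sum (fun a _ => (exp_pos (f a)).le) (mem_univ a))
  have hupper : log (∑ a, exp (f a)) ≤ log (Fintype.card α) + C := by
    rw [log_le_iff_le_exp hZ, exp_add, exp_log (by exact_mod_cast Fintype.card_pos)]
    simpa using sum_le_card_nsmul univ _ _ fun a _ => exp_le_exp.2 (le_of_abs_le (hf a))
  exact abs_le.2 ⟨by linarith, hupper⟩

theorem abs_spin (b : Bool) : |spin b| = 1 := by cases b <;> simp [spin]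

section Ladder

variable {N : ℕ}

noncomputable def ladderSlice (K1 K2 l1 l2 : Fin N → ℝ) (b : Bool) (j : Fin N)
    (σ : Fin N → Bool × Bool) : ℝ :=
  if b then K1 j * spin (σ j).1 * spin (σ (nxt j)).1 + K2 j * spin (σ j).2 * spin (σ (nxt j)).2
  else l1 j * spin (σ j).1 * spin (σ j).2 + l2 j * spin (σ (nxt j)).1 * spin (σ (nxt j)).2

noncomputable def ladderCouplingNorm (K1 K2 L l1 l2 : Fin N → ℝ) : ℝ :=
  ∑ j, (|L j| + (|K1 j| + |K2 j| + |l1 j| + |l2 j|))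

theorem ladderZt_eq (β : ℝ) (K1 K2 L l1 l2 : Fin N → ℝ) (m : Fin N → Bool) :
    ladderZt N β K1 K2 L l1 l2 m = ∑ σ : Fin N → Bool × Bool,
      exp (β * ((∑ j, L j * spin (σ j).1 * spin (σ j).2) +
        ∑ j, ladderSlice K1 K2 l1 l2 (m j) j σ)) := rfl

theorem ladderCutW_eq (β : ℝ) (K1 K2 L l1 l2 : Fin N → ℝ) (m : Fin N → Bool) (i : Fin N)
    (g : (Fin N → Bool × Bool) → ℝ) :
    ladderCutW N β K1 K2 L l1 l2 m i g = ∑ σ : Fin N → Bool × Bool, g σ *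
      exp (β * ((∑ j, L j * spin (σ j).1 * spin (σ j).2) +
        ∑ j ∈ univ.erase i, ladderSlice K1 K2 l1 l2 (m j) j σ)) := rfl

theorem ladderZt_pos (β : ℝ) (K1 K2 L l1 l2 : Fin N → ℝ) (m : Fin N → Bool) :
    0 < ladderZt N β K1 K2 L l1 l2 m :=
  sum_pos (fun _ _ => exp_pos _) univ_nonempty

theorem abs_ladderSlice_le (K1 K2 l1 l2 : Fin N → ℝ) (b : Bool) (j : Fin N)
    (σ : Fin N → Bool × Bool) :
    |ladderSlice K1 K2 l1 l2 b j σ| ≤ |K1 j| + |K2 j| + |l1 j| + |l2 j| := by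
  unfold ladderSlice
  split <;> refine (abs_add_le _ _).trans ?_ <;> simp only [abs_mul, abs_spin, mul_one] <;>
    linarith [abs_nonneg (K1 j), abs_nonneg (K2 j), abs_nonneg (l1 j), abs_nonneg (l2 j)]

theorem abs_log_ladderZt_le (β : ℝ) (K1 K2 L l1 l2 : Fin N → ℝ) (m : Fin N → Bool) :
    |log (ladderZt N β K1 K2 L l1 l2 m)| ≤
      N * log 4 + |β| * ladderCouplingNorm K1 K2 L l1 l2 := by
  have hcard : log (Fintype.card (Fin N → Bool × Bool)) = N * log 4 := by simp [log_pow]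
  rw [ladderZt_eq, ← hcard]
  refine abs_log_sum_exp_le _ fun σ => ?_
  rw [abs_mul, ladderCouplingNorm, sum_add_distrib]
  gcongr
  refine (abs_add_le _ _).trans (add_le_add ?_ ?_) <;> refine (abs_sum_le_sum_abs _ _).trans ?_
  · simp only [abs_mul, abs_spin, mul_one, le_refl]
  · exact sum_le_sum fun j _ => abs_ladderSlice_le K1 K2 l1 l2 (m j) j σ

abbrev LadderCouplings (N : ℕ) : Type :=
  (Fin N → ℝ) × (Fin N → ℝ) × (Fin N → ℝ) × (Fin N → ℝ) × (Fin N → ℝ)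

noncomputable abbrev ladderCouplingLaw (μ1 μ2 μL μl : Measure ℝ) (N : ℕ) :
    Measure (LadderCouplings N) :=
  (Measure.pi fun _ : Fin N => μ1).prod ((Measure.pi fun _ : Fin N => μ2).prod
    ((Measure.pi fun _ : Fin N => μL).prod ((Measure.pi fun _ : Fin N => μl).prod
      (Measure.pi fun _ : Fin N => μl))))

theorem continuous_ladderZt (β : ℝ) (m : Fin N → Bool) :
    Continuous fun ω : LadderCouplings N =>
      ladderZt N β ω.1 ω.2.1 ω.2.2.1 ω.2.2.2.1 ω.2.2.2.2 m := by
  simp only [ladderZt_eq]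
  refine continuous_finsetSum _ fun σ _ => continuous_exp.comp (continuous_const.mul
    ((by fun_prop : Continuous _).add (continuous_finsetSum _ fun j _ => ?_)))
  unfold ladderSlice
  split <;> fun_prop

section Integrability

variable {μ1 μ2 μL μl : Measure ℝ} [IsFiniteMeasure μ1] [IsFiniteMeasure μ2]
  [IsFiniteMeasure μL] [IsFiniteMeasure μl]

theorem integrable_ladderCouplingNorm
    (h1 : Integrable (fun x : ℝ => x) μ1) (h2 : Integrable (fun x : ℝ => x) μ2)
    (hL : Integrable (fun x : ℝ => x) μL) (hl : Integrable (fun x : ℝ => x) μl) :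
    Integrable (fun ω : LadderCouplings N =>
      ladderCouplingNorm ω.1 ω.2.1 ω.2.2.1 ω.2.2.2.1 ω.2.2.2.2)
      (ladderCouplingLaw μ1 μ2 μL μl N) := by
  set P1 := Measure.pi fun _ : Fin N => μ1
  set P2 := Measure.pi fun _ : Fin N => μ2
  set PL := Measure.pi fun _ : Fin N => μL
  set Pl := Measure.pi fun _ : Fin N => μl
  refine integrable_finsetSum univ fun j _ => ?_
  have hK1 := (integrable_comp_eval (μ := fun _ => μ1) (i := j) h1.abs).comp_fst
    (P2.prod (PL.prod (Pl.prod Pl)))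
  have hK2 := ((integrable_comp_eval (μ := fun _ => μ2) (i := j) h2.abs).comp_fst
    (PL.prod (Pl.prod Pl))).comp_snd P1
  have hL' := (((integrable_comp_eval (μ := fun _ => μL) (i := j) hL.abs).comp_fst
    (Pl.prod Pl)).comp_snd P2).comp_snd P1
  have hl1 := ((((integrable_comp_eval (μ := fun _ => μl) (i := j) hl.abs).comp_fst
    Pl).comp_snd PL).comp_snd P2).comp_snd P1
  have hl2 := ((((integrable_comp_eval (μ := fun _ => μl) (i := j) hl.abs).comp_snd
    Pl).comp_snd PL).comp_snd P2).comp_snd P1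
  exact hL'.add (((hK1.add hK2).add hl1).add hl2)

theorem integrable_log_ladderZt
    (h1 : Integrable (fun x : ℝ => x) μ1) (h2 : Integrable (fun x : ℝ => x) μ2)
    (hL : Integrable (fun x : ℝ => x) μL) (hl : Integrable (fun x : ℝ => x) μl)
    (β : ℝ) (m : Fin N → Bool) :
    Integrable (fun ω : LadderCouplings N =>
      log (ladderZt N β ω.1 ω.2.1 ω.2.2.1 ω.2.2.2.1 ω.2.2.2.2 m))
      (ladderCouplingLaw μ1 μ2 μL μl N) := by
  have hbound := (integrable_const ((N : ℝ) * log 4)).add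
    ((integrable_ladderCouplingNorm (N := N) h1 h2 hL hl).const_mul |β|)
  have hcont := (continuous_ladderZt β m).log fun ω => (ladderZt_pos ..).ne'
  refine hbound.mono' hcont.aestronglyMeasurable (ae_of_all _ fun ω => ?_)
  exact (norm_eq_abs _).trans_le
    (abs_log_ladderZt_le β ω.1 ω.2.1 ω.2.2.1 ω.2.2.2.1 ω.2.2.2.2 m)

end Integrability

theorem sum_ladderSlice_update (K1 K2 l1 l2 : Fin N → ℝ) (m : Fin N → Bool) (i : Fin N)
    (b : Bool) (σ : Fin N → Bool × Bool) :
    ∑ j, ladderSlice K1 K2 l1 l2 (update m i b j) j σ =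
      ladderSlice K1 K2 l1 l2 b i σ +
        ∑ j ∈ univ.erase i, ladderSlice K1 K2 l1 l2 (m j) j σ := by
  rw [← add_sum_erase _ _ (mem_univ i), update_self]
  exact congrArg _ (sum_congr rfl fun j hj => by rw [update_of_ne (ne_of_mem_erase hj)])

theorem ladderCutW_exp_ladderSlice (β : ℝ) (K1 K2 L l1 l2 : Fin N → ℝ) (m : Fin N → Bool)
    (i : Fin N) (b : Bool) :
    ladderCutW N β K1 K2 L l1 l2 m i (fun σ => exp (β * ladderSlice K1 K2 l1 l2 b i σ)) =
      ladderZt N β K1 K2 L l1 l2 (update m i b) := by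
  rw [ladderCutW_eq, ladderZt_eq]
  refine sum_congr rfl fun σ _ => ?_
  rw [← exp_add, sum_ladderSlice_update]
  ring_nf

theorem log_ladderCutAvg_div (β : ℝ) (K1 K2 L l1 l2 : Fin N → ℝ) (m : Fin N → Bool)
    (i : Fin N) :
    log (ladderCutAvg N β K1 K2 L l1 l2 m i
        (fun σ => exp (β * (K1 i * spin (σ i).1 * spin (σ (nxt i)).1 +
          K2 i * spin (σ i).2 * spin (σ (nxt i)).2))) /
      ladderCutAvg N β K1 K2 L l1 l2 m i
        (fun σ => exp (β * (l1 i * spin (σ i).1 * spin (σ i).2 +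
          l2 i * spin (σ (nxt i)).1 * spin (σ (nxt i)).2)))) =
      log (ladderZt N β K1 K2 L l1 l2 (update m i true)) -
        log (ladderZt N β K1 K2 L l1 l2 (update m i false)) := by
  have hW : ladderCutW N β K1 K2 L l1 l2 m i (fun _ => 1) ≠ 0 :=
    (sum_pos (fun _ _ => by positivity) univ_nonempty).ne'
  have hT := ladderCutW_exp_ladderSlice β K1 K2 L l1 l2 m i true
  have hF := ladderCutW_exp_ladderSlice β K1 K2 L l1 l2 m i false
  simp only [ladderSlice, if_true, Bool.false_eq_true, if_false] at hT hF
  unfold ladderCutAvg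
  rw [div_div_div_cancel_right₀ hW, hT, hF, log_div (ladderZt_pos ..).ne' (ladderZt_pos ..).ne']

end Ladder

theorem ladder_interpolation_deriv_general (β : ℝ) (μ1 μ2 μL μl : Measure ℝ)
    [IsProbabilityMeasure μ1] [IsProbabilityMeasure μ2] [IsProbabilityMeasure μL]
    [IsProbabilityMeasure μl]
    (h1 : Integrable (fun x : ℝ => x) μ1) (h2 : Integrable (fun x : ℝ => x) μ2)
    (hL : Integrable (fun x : ℝ => x) μL) (hl : Integrable (fun x : ℝ => x) μl) :
    ∀ N : ℕ, 2 ≤ N → ∀ t ∈ Set.Icc (0:ℝ) 1,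
      deriv (ladderFt β μ1 μ2 μL μl N) t =
        -(1 / (β * N)) * ∑ i : Fin N,
          ∫ ω : (Fin N → ℝ) × (Fin N → ℝ) × (Fin N → ℝ) × (Fin N → ℝ) × (Fin N → ℝ),
            ∑ m : Fin N → Bool, (∏ j : Fin N, bern t (m j)) *
              Real.log
                (ladderCutAvg N β ω.1 ω.2.1 ω.2.2.1 ω.2.2.2.1 ω.2.2.2.2 m i
                    (fun σ => Real.exp (β * (ω.1 i * spin (σ i).1 * spin (σ (nxt i)).1 +
                      ω.2.1 i * spin (σ i).2 * spin (σ (nxt i)).2))) /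
                  ladderCutAvg N β ω.1 ω.2.1 ω.2.2.1 ω.2.2.2.1 ω.2.2.2.2 m i
                    (fun σ => Real.exp (β * (ω.2.2.2.1 i * spin (σ i).1 * spin (σ i).2 +
                      ω.2.2.2.2 i * spin (σ (nxt i)).1 * spin (σ (nxt i)).2))))
          ∂((Measure.pi fun _ : Fin N => μ1).prod ((Measure.pi fun _ : Fin N => μ2).prod
            ((Measure.pi fun _ : Fin N => μL).prod ((Measure.pi fun _ : Fin N => μl).prod
              (Measure.pi fun _ : Fin N => μl))))) := by
  intro N _ t _
  have hint := integrable_log_ladderZt (N := N) h1 h2 hL hl β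
  let c : (Fin N → Bool) → ℝ := fun m =>
    ∫ ω : LadderCouplings N, log (ladderZt N β ω.1 ω.2.1 ω.2.2.1 ω.2.2.2.1 ω.2.2.2.2 m)
      ∂ladderCouplingLaw μ1 μ2 μL μl N
  have hFt : ladderFt β μ1 μ2 μL μl N =
      fun s => -(1 / (β * N)) * ∑ m, (∏ j, bern s (m j)) * c m :=
    funext fun s => by rw [ladderFt, integral_sum_mul _ hint]
  rw [hFt, ((hasDerivAt_sum_prod_bern_mul c t).const_mul _).deriv]
  refine congrArg _ (sum_congr rfl fun i _ => ?_)
  simp only [log_ladderCutAvg_div]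
  have hdiff := integral_sum_mul (ρ := ladderCouplingLaw μ1 μ2 μL μl N)
    (fun m : Fin N → Bool => ∏ j, bern t (m j))
    (F := fun m ω =>
      log (ladderZt N β ω.1 ω.2.1 ω.2.2.1 ω.2.2.2.1 ω.2.2.2.2 (update m i true)) -
        log (ladderZt N β ω.1 ω.2.1 ω.2.2.1 ω.2.2.2.1 ω.2.2.2.2 (update m i false)))
    fun m => (hint (update m i true)).sub (hint (update m i false))
  rw [hdiff]
  exact sum_congr rfl fun m _ => congrArg _ (integral_sub (hint _) (hint _)).symm

theorem ladder_interpolation_deriv (β : ℝ) (hβ : 0 < β) (μ1 μ2 μL μl : Measure ℝ)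
    [IsProbabilityMeasure μ1] [IsProbabilityMeasure μ2] [IsProbabilityMeasure μL]
    [IsProbabilityMeasure μl]
    (hsym1 : Measure.map (fun x : ℝ => -x) μ1 = μ1)
    (hsym2 : Measure.map (fun x : ℝ => -x) μ2 = μ2)
    (h1 : Integrable (fun x : ℝ => x) μ1) (h2 : Integrable (fun x : ℝ => x) μ2)
    (hL : Integrable (fun x : ℝ => x) μL) (hl : Integrable (fun x : ℝ => x) μl) :
    ∀ N : ℕ, 2 ≤ N → ∀ t ∈ Set.Icc (0:ℝ) 1,
      deriv (ladderFt β μ1 μ2 μL μl N) t =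
        -(1 / (β * N)) * ∑ i : Fin N,
          ∫ ω : (Fin N → ℝ) × (Fin N → ℝ) × (Fin N → ℝ) × (Fin N → ℝ) × (Fin N → ℝ),
            ∑ m : Fin N → Bool, (∏ j : Fin N, bern t (m j)) *
              Real.log
                (ladderCutAvg N β ω.1 ω.2.1 ω.2.2.1 ω.2.2.2.1 ω.2.2.2.2 m i
                    (fun σ => Real.exp (β * (ω.1 i * spin (σ i).1 * spin (σ (nxt i)).1 +
                      ω.2.1 i * spin (σ i).2 * spin (σ (nxt i)).2))) /
                  ladderCutAvg N β ω.1 ω.2.1 ω.2.2.1 ω.2.2.2.1 ω.2.2.2.2 m i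
                    (fun σ => Real.exp (β * (ω.2.2.2.1 i * spin (σ i).1 * spin (σ i).2 +
                      ω.2.2.2.2 i * spin (σ (nxt i)).1 * spin (σ (nxt i)).2))))
          ∂((Measure.pi fun _ : Fin N => μ1).prod ((Measure.pi fun _ : Fin N => μ2).prod
            ((Measure.pi fun _ : Fin N => μL).prod ((Measure.pi fun _ : Fin N => μl).prod
              (Measure.pi fun _ : Fin N => μl))))) :=
  ladder_interpolation_deriv_general β μ1 μ2 μL μl h1 h2 hL hl
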